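/- Let b, c, e be complex numbers with e not a nonpositive integer, and let t be a real number with 0 ≤ t < 1. Then Σ_{m≥0} (b)_m (c)_m t^m / ((e)_m m!) = (1-t)^{e-b-c} Σ_{m≥0} (e-b)_m (e-c)_m t^m / ((e)_m m!). -/

import Mathlib

open Complex Finset Filter Topology

/-- Pochhammer symbol `(a)_k = a(a+1)⋯(a+k-1)`. -/
noncomputable def poch (a : ℂ) (k : ℕ) : ℂ := ∏ i ∈ Finset.range k, (a + i)

/-- `z` is not a nonpositive integer. -/
def notNonposInt (z : ℂ) : Prop := ∀ k : ℕ, z ≠ -(k : ℂ)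

lemma poch_zero (a : ℂ) : poch a 0 = 1 := by simp [poch]

lemma poch_succ (a : ℂ) (n : ℕ) : poch a (n+1) = poch a n * (a + n) := by
  simp [poch, Finset.prod_range_succ]

lemma poch_one' (a : ℂ) : poch a 1 = a := by simp [poch]

lemma poch_add (a : ℂ) (p q : ℕ) : poch a (p + q) = poch a p * poch (a + p) q := by
  induction q with
  | zero => simp [poch_zero]
  | succ q ih =>
    rw [← Nat.add_assoc, poch_succ, ih, poch_succ]
    push_cast
    ring

lemma poch_nat_one (n : ℕ) : poch 1 n = (n.factorial : ℂ) := by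
  induction n with
  | zero => simp [poch_zero]
  | succ n ih =>
    rw [poch_succ, ih, Nat.factorial_succ]
    push_cast
    ring

lemma notNonposInt.add_nat_ne_zero {e : ℂ} (he : notNonposInt e) (n : ℕ) : e + n ≠ 0 := by
  intro h
  exact he n (by linear_combination h)

lemma notNonposInt.succ {e : ℂ} (he : notNonposInt e) : notNonposInt (e + 1) := by
  intro k h
  have := he (k + 1)
  push_cast at this
  exact this (by linear_combination h)

lemma poch_ne_zero {e : ℂ} (he : notNonposInt e) (n : ℕ) : poch e n ≠ 0 := by
  induction n with
  | zero => simp [poch_zero]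
  | succ n ih =>
    rw [poch_succ]
    exact mul_ne_zero ih (he.add_nat_ne_zero n)

lemma vandermonde (n : ℕ) (x y : ℂ) :
    ∑ i ∈ range (n+1), (n.choose i : ℂ) * poch x i * poch y (n-i) = poch (x+y) n := by
  induction n generalizing x y with
  | zero => simp [poch_zero]
  | succ n ih =>
    have key : ∀ i ∈ range (n+1),
        ((n+1).choose (i+1) : ℂ) * poch x (i+1) * poch y ((n+1)-(i+1))
          = (n.choose i : ℂ) * poch x (i+1) * poch y (n-i)
            + (n.choose (i+1) : ℂ) * poch x (i+1) * poch y ((n+1)-(i+1)) := by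
      intro i hi
      have h1 : (n+1).choose (i+1) = n.choose i + n.choose (i+1) := Nat.choose_succ_succ n i
      have h2 : (n+1) - (i+1) = n - i := by omega
      rw [h1, h2]
      push_cast
      ring
    have e4 : ∑ i ∈ range (n+2), (n.choose i : ℂ) * poch x i * poch y ((n+1)-i)
        = ∑ i ∈ range (n+1), (n.choose (i+1) : ℂ) * poch x (i+1) * poch y ((n+1)-(i+1))
          + poch y (n+1) := by
      rw [Finset.sum_range_succ']
      simp [poch_zero]
    have e5 : ∑ i ∈ range (n+2), (n.choose i : ℂ) * poch x i * poch y ((n+1)-i)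
        = ∑ i ∈ range (n+1), (n.choose i : ℂ) * poch x i * poch y ((n+1)-i) := by
      rw [Finset.sum_range_succ]
      simp
    have collapse : ∑ i ∈ range (n+1), (n.choose i : ℂ) * poch x i * poch y ((n+1)-i)
        + ∑ i ∈ range (n+1), (n.choose i : ℂ) * poch x (i+1) * poch y (n-i)
        = (x + y + n) * ∑ i ∈ range (n+1), (n.choose i : ℂ) * poch x i * poch y (n-i) := by
      rw [Finset.mul_sum, ← Finset.sum_add_distrib]
      refine Finset.sum_congr rfl fun i hi => ?_
      have hin : i ≤ n := by simpa [Nat.lt_succ_iff] using hi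
      have h1 : (n+1) - i = (n-i) + 1 := by omega
      have hc : ((n - i : ℕ) : ℂ) = (n : ℂ) - i := by
        push_cast [Nat.cast_sub hin]; ring
      rw [h1, poch_succ, poch_succ, hc]
      ring
    calc ∑ i ∈ range (n+1+1), ((n+1).choose i : ℂ) * poch x i * poch y (n+1-i)
        = ∑ i ∈ range (n+1), ((n+1).choose (i+1) : ℂ) * poch x (i+1) * poch y ((n+1)-(i+1))
          + poch y (n+1) := by
          rw [Finset.sum_range_succ']
          simp [poch_zero]
      _ = (∑ i ∈ range (n+1), (n.choose i : ℂ) * poch x (i+1) * poch y (n-i)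
          + ∑ i ∈ range (n+1), (n.choose (i+1) : ℂ) * poch x (i+1) * poch y ((n+1)-(i+1)))
          + poch y (n+1) := by rw [Finset.sum_congr rfl key, Finset.sum_add_distrib]
      _ = ∑ i ∈ range (n+1), (n.choose i : ℂ) * poch x i * poch y ((n+1)-i)
          + ∑ i ∈ range (n+1), (n.choose i : ℂ) * poch x (i+1) * poch y (n-i) := by
          linear_combination e5 - e4
      _ = (x + y + n) * ∑ i ∈ range (n+1), (n.choose i : ℂ) * poch x i * poch y (n-i) :=
          collapse
      _ = poch (x+y) (n+1) := by rw [ih, poch_succ]; ring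

lemma poch_succ_left (a : ℂ) (q : ℕ) : poch a (q+1) = a * poch (a+1) q := by
  have h := poch_add a 1 q
  rw [Nat.add_comm 1 q] at h
  rw [h, poch_one']
  norm_num

lemma vdm_ratio (n : ℕ) : ∀ (a e : ℂ), notNonposInt e →
    ∑ j ∈ range (n+1), (n.choose j : ℂ) * (-1)^j * poch a j / poch e j
      = poch (e-a) n / poch e n := by
  induction n with
  | zero => simp [poch_zero]
  | succ n ih =>
    intro a e he
    have he0 : e ≠ 0 := by simpa using he.add_nat_ne_zero 0
    have hen : poch e n ≠ 0 := poch_ne_zero he n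
    have hen1 : poch (e+1) n ≠ 0 := poch_ne_zero he.succ n
    have key : ∀ j ∈ range (n+1),
        ((n+1).choose (j+1) : ℂ) * (-1)^(j+1) * poch a (j+1) / poch e (j+1)
          = (n.choose j : ℂ) * (-1)^(j+1) * poch a (j+1) / poch e (j+1)
            + (n.choose (j+1) : ℂ) * (-1)^(j+1) * poch a (j+1) / poch e (j+1) := by
      intro j hj
      rw [Nat.choose_succ_succ n j]
      push_cast
      ring
    have step1 : ∀ j ∈ range (n+1),
        (n.choose j : ℂ) * (-1)^(j+1) * poch a (j+1) / poch e (j+1)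
          = -(a/e) * ((n.choose j : ℂ) * (-1)^j * poch (a+1) j / poch (e+1) j) := by
      intro j hj
      have hej : poch (e+1) j ≠ 0 := poch_ne_zero he.succ j
      rw [poch_succ_left a j, poch_succ_left e j]
      field_simp
      ring
    have e4 : ∑ j ∈ range (n+2), (n.choose j : ℂ) * (-1)^j * poch a j / poch e j
        = ∑ j ∈ range (n+1), (n.choose (j+1) : ℂ) * (-1)^(j+1) * poch a (j+1) / poch e (j+1)
          + 1 := by
      rw [Finset.sum_range_succ']
      simp [poch_zero]
    have e5 : ∑ j ∈ range (n+2), (n.choose j : ℂ) * (-1)^j * poch a j / poch e j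
        = poch (e-a) n / poch e n := by
      rw [Finset.sum_range_succ]
      simp only [Nat.choose_succ_self, Nat.cast_zero, zero_mul, zero_div, add_zero]
      exact ih a e he
    have eIH : ∑ j ∈ range (n+1), (n.choose j : ℂ) * (-1)^j * poch (a+1) j / poch (e+1) j
        = poch (e-a) n / poch (e+1) n := by
      have := ih (a+1) (e+1) he.succ
      rwa [show e + 1 - (a + 1) = e - a by ring] at this
    calc ∑ j ∈ range (n+1+1), ((n+1).choose j : ℂ) * (-1)^j * poch a j / poch e j
        = ∑ j ∈ range (n+1), ((n+1).choose (j+1) : ℂ) * (-1)^(j+1) * poch a (j+1) / poch e (j+1)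
          + 1 := by
          rw [Finset.sum_range_succ']
          simp [poch_zero]
      _ = (∑ j ∈ range (n+1), (n.choose j : ℂ) * (-1)^(j+1) * poch a (j+1) / poch e (j+1)
          + ∑ j ∈ range (n+1), (n.choose (j+1) : ℂ) * (-1)^(j+1) * poch a (j+1) / poch e (j+1))
          + 1 := by rw [Finset.sum_congr rfl key, Finset.sum_add_distrib]
      _ = ∑ j ∈ range (n+1), -(a/e) * ((n.choose j : ℂ) * (-1)^j * poch (a+1) j / poch (e+1) j)
          + poch (e-a) n / poch e n := by
          rw [← Finset.sum_congr rfl step1]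
          linear_combination e5 - e4
      _ = -(a/e) * (poch (e-a) n / poch (e+1) n) + poch (e-a) n / poch e n := by
          rw [← Finset.mul_sum, eIH]
      _ = poch (e-a) (n+1) / poch e (n+1) := by
          have h2 : poch e (n+1) = e * poch (e+1) n := poch_succ_left e n
          have h3 : poch e (n+1) = poch e n * (e + n) := poch_succ e n
          have h4 : poch (e-a) (n+1) = poch (e-a) n * (e - a + n) := poch_succ (e-a) n
          have hrel : poch e n * (e + (n:ℂ)) = e * poch (e+1) n := by
            rw [← h3, h2]
          rw [h4, h2]
          field_simp
          linear_combination (-(poch (e-a) n)) * hrel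

lemma fact_ne (n : ℕ) : (n.factorial : ℂ) ≠ 0 := by
  exact_mod_cast Nat.factorial_ne_zero n

lemma choose_cast_eq (n i : ℕ) (hi : i ≤ n) :
    ((n.choose i : ℕ) : ℂ) * (i.factorial : ℂ) * ((n-i).factorial : ℂ)
      = (n.factorial : ℂ) := by
  exact_mod_cast congrArg (Nat.cast : ℕ → ℂ)
    (Nat.choose_mul_factorial_mul_factorial hi)

lemma vandermonde_div (n : ℕ) (x y : ℂ) :
    ∑ i ∈ range (n+1), poch x i * poch y (n-i) / (i.factorial * (n-i).factorial)
      = poch (x+y) n / n.factorial := by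
  rw [← vandermonde n x y, Finset.sum_div]
  refine Finset.sum_congr rfl fun i hi => ?_
  have hin : i ≤ n := by simpa [Nat.lt_succ_iff] using hi
  rw [div_eq_div_iff (mul_ne_zero (fact_ne i) (fact_ne (n-i))) (fact_ne n)]
  linear_combination (-(poch x i * poch y (n-i))) * choose_cast_eq n i hin

lemma pochInnerSum (b d : ℂ) (j m : ℕ) (hj : j ≤ m) :
    ∑ k ∈ Finset.Ico j (m+1),
        poch b k * poch d (m-k) * (k.choose j : ℂ) / (k.factorial * (m-k).factorial)
      = poch b j * poch (b + j + d) (m-j) / (j.factorial * (m-j).factorial) := by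
  rw [Finset.sum_Ico_eq_sum_range]
  have hM : m + 1 - j = (m - j) + 1 := by omega
  rw [hM]
  have key : ∀ i ∈ range ((m-j)+1),
      poch b (j+i) * poch d (m-(j+i)) * ((j+i).choose j : ℂ)
          / ((j+i).factorial * (m-(j+i)).factorial)
        = (poch b j / j.factorial)
          * (poch (b + j) i * poch d ((m-j)-i) / (i.factorial * ((m-j)-i).factorial)) := by
    intro i hi
    have him : i ≤ m - j := by simpa [Nat.lt_succ_iff] using hi
    have h1 : m - (j+i) = (m-j) - i := by omega
    have h2 : poch b (j+i) = poch b j * poch (b + j) i := poch_add b j i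
    have h3 : ((j+i).choose j : ℂ) * (j.factorial : ℂ) * (i.factorial : ℂ)
        = ((j+i).factorial : ℂ) := by
      have := choose_cast_eq (j+i) j (Nat.le_add_right j i)
      simpa using this
    rw [h1, h2, div_mul_div_comm]
    rw [div_eq_div_iff (mul_ne_zero (fact_ne (j+i)) (fact_ne ((m-j)-i)))
      (by exact mul_ne_zero (fact_ne j) (mul_ne_zero (fact_ne i) (fact_ne ((m-j)-i))))]
    linear_combination (poch b j * poch (b+j) i * poch d ((m-j)-i)
      * (((m-j)-i).factorial : ℂ)) * h3
  rw [Finset.sum_congr rfl key, ← Finset.mul_sum, vandermonde_div]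
  rw [div_mul_div_comm]

lemma saalschutz (b c e : ℂ) (he : notNonposInt e) (m : ℕ) :
    ∑ k ∈ range (m+1),
        poch b k * poch c k * poch (e-b-c) (m-k) / (poch e k * k.factorial * (m-k).factorial)
      = poch (e-b) m * poch (e-c) m / (poch e m * m.factorial) := by
  set d : ℂ := e - b - c with hd
  -- step 1: expand poch c k / poch e k by vdm_ratio
  have step1 : ∀ k ∈ range (m+1),
      poch b k * poch c k * poch d (m-k) / (poch e k * k.factorial * (m-k).factorial)
        = ∑ j ∈ range (k+1),
            (poch b k * poch d (m-k) / (k.factorial * (m-k).factorial))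
              * ((k.choose j : ℂ) * (-1)^j * poch (e-c) j / poch e j) := by
    intro k hk
    rw [← Finset.mul_sum, vdm_ratio k (e-c) e he]
    have h1 : e - (e - c) = c := by ring
    rw [h1]
    have h2 : poch e k ≠ 0 := poch_ne_zero he k
    field_simp
  rw [Finset.sum_congr rfl step1]
  -- step 2: swap the order of summation
  have swap : ∑ k ∈ range (m+1), ∑ j ∈ range (k+1),
        (poch b k * poch d (m-k) / (k.factorial * (m-k).factorial))
          * ((k.choose j : ℂ) * (-1)^j * poch (e-c) j / poch e j)
      = ∑ j ∈ range (m+1), ∑ k ∈ Finset.Ico j (m+1),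
        (poch b k * poch d (m-k) / (k.factorial * (m-k).factorial))
          * ((k.choose j : ℂ) * (-1)^j * poch (e-c) j / poch e j) := by
    simp only [Finset.range_eq_Ico]
    rw [← Finset.sum_Ico_Ico_comm 0 (m+1)]
  rw [swap]
  -- step 3: evaluate the inner sums
  have step3 : ∀ j ∈ range (m+1),
      ∑ k ∈ Finset.Ico j (m+1),
        (poch b k * poch d (m-k) / (k.factorial * (m-k).factorial))
          * ((k.choose j : ℂ) * (-1)^j * poch (e-c) j / poch e j)
      = ((m.choose j : ℂ) * (-1)^j * poch b j / poch e j)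
          * (poch (e-c) m / (m.factorial : ℂ)) := by
    intro j hj
    have hjm : j ≤ m := by simpa [Nat.lt_succ_iff] using hj
    have collect : ∀ k ∈ Finset.Ico j (m+1),
        (poch b k * poch d (m-k) / (k.factorial * (m-k).factorial))
          * ((k.choose j : ℂ) * (-1)^j * poch (e-c) j / poch e j)
        = ((-1)^j * poch (e-c) j / poch e j)
          * (poch b k * poch d (m-k) * (k.choose j : ℂ) / (k.factorial * (m-k).factorial)) := by
      intro k hk
      ring
    rw [Finset.sum_congr rfl collect, ← Finset.mul_sum, pochInnerSum b d j m hjm]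
    have hbjd : b + j + d = (e - c) + j := by rw [hd]; ring
    rw [hbjd]
    have hsplit : poch (e-c) j * poch ((e-c) + j) (m-j) = poch (e-c) m := by
      rw [← poch_add (e-c) j (m-j), Nat.add_sub_cancel' hjm]
    have h2 : poch e j ≠ 0 := poch_ne_zero he j
    have h3 := choose_cast_eq m j hjm
    rw [div_mul_div_comm, div_mul_div_comm, div_eq_div_iff
      (by exact mul_ne_zero h2 (mul_ne_zero (fact_ne j) (fact_ne (m-j))))
      (by exact mul_ne_zero h2 (fact_ne m))]
    linear_combination ((-1)^j * poch b j * poch e j * (m.factorial : ℂ)) * hsplit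
      - ((-1)^j * poch b j * poch e j * poch (e-c) m) * h3
  rw [Finset.sum_congr rfl step3, ← Finset.sum_mul, vdm_ratio m b e he]
  have h2 : poch e m ≠ 0 := poch_ne_zero he m
  field_simp

lemma summable_ratio_aux {f : ℕ → ℝ} {q : ℕ → ℝ} {L : ℝ} (hL : L < 1)
    (hq : Tendsto q atTop (𝓝 L)) (hrel : ∀ᶠ n in atTop, ‖f (n+1)‖ ≤ q n * ‖f n‖) :
    Summable f := by
  set r : ℝ := (L+1)/2 with hr
  have hr1 : r < 1 := by rw [hr]; linarith
  have hLr : L < r := by rw [hr]; linarith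
  have hev : ∀ᶠ n in atTop, q n ≤ r := hq.eventually_le_const hLr
  apply summable_of_ratio_norm_eventually_le hr1
  filter_upwards [hrel, hev] with n h1 h2
  exact h1.trans (mul_le_mul_of_nonneg_right h2 (norm_nonneg _))

lemma tendsto_inv_natCast_add_one :
    Tendsto (fun n : ℕ => (((n : ℂ)) + 1)⁻¹) atTop (𝓝 0) := by
  have h := tendsto_one_div_add_atTop_nhds_zero_nat (𝕜 := ℝ)
  have : Tendsto (fun n : ℕ => ((1 / ((n : ℝ) + 1) : ℝ) : ℂ)) atTop (𝓝 ((0:ℝ):ℂ)) :=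
    (Complex.continuous_ofReal.tendsto _).comp h
  simpa [one_div] using this

lemma tendsto_ratio_one (z : ℂ) :
    Tendsto (fun n : ℕ => (z + n) / ((n : ℂ) + 1)) atTop (𝓝 1) := by
  have key : ∀ n : ℕ, (z + n) / ((n : ℂ) + 1) = 1 + (z - 1) * ((n : ℂ) + 1)⁻¹ := by
    intro n
    have hn : ((n : ℂ) + 1) ≠ 0 := Nat.cast_add_one_ne_zero n
    field_simp
    ring
  simp only [key]
  have h : Tendsto (fun n : ℕ => 1 + (z - 1) * (((n:ℂ))+1)⁻¹) atTop (𝓝 (1 + (z-1)*0)) :=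
    tendsto_const_nhds.add (tendsto_const_nhds.mul tendsto_inv_natCast_add_one)
  simpa using h

lemma tendsto_ratio_pair (c e : ℂ) (he : ∀ n : ℕ, e + n ≠ 0) :
    Tendsto (fun n : ℕ => (c + n) / (e + n)) atTop (𝓝 1) := by
  have key : ∀ n : ℕ, (c + n) / (e + n)
      = ((c + n) / ((n : ℂ) + 1)) / ((e + n) / ((n : ℂ) + 1)) := by
    intro n
    have hn : ((n : ℂ) + 1) ≠ 0 := Nat.cast_add_one_ne_zero n
    have h2 := he n
    rw [div_div_div_eq]
    field_simp
  simp only [key]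
  simpa [Pi.div_def] using (tendsto_ratio_one c).div (tendsto_ratio_one e) one_ne_zero

lemma summable_norm_hyp (b c e : ℂ) (he : ∀ n : ℕ, e + (n:ℂ) ≠ 0)
    (hpe : ∀ n, poch e n ≠ 0) (x : ℂ) (hx : ‖x‖ < 1) :
    Summable fun n => ‖poch b n * poch c n * x ^ n / (poch e n * (n.factorial : ℂ))‖ := by
  set F : ℕ → ℂ := fun n => poch b n * poch c n * x ^ n / (poch e n * (n.factorial : ℂ))
    with hF
  set q : ℕ → ℝ := fun n => ‖(b + n) * (c + n) * x / ((e + n) * ((n:ℂ) + 1))‖ with hq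
  have hrel : ∀ n, F (n+1) = ((b + n) * (c + n) * x / ((e + n) * ((n:ℂ) + 1))) * F n := by
    intro n
    rw [hF]
    simp only
    rw [poch_succ, poch_succ, poch_succ, Nat.factorial_succ]
    have h1 : ((n+1).factorial : ℂ) ≠ 0 := fact_ne _
    have hn1 : ((n : ℂ) + 1) ≠ 0 := Nat.cast_add_one_ne_zero n
    push_cast
    field_simp
    ring
  have hqlim : Tendsto q atTop (𝓝 ‖x‖) := by
    have : Tendsto (fun n : ℕ => (b + n) * (c + n) * x / ((e + n) * ((n:ℂ) + 1)))
        atTop (𝓝 x) := by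
      have key : ∀ n : ℕ, (b + n) * (c + n) * x / ((e + n) * ((n:ℂ) + 1))
          = ((b + n) / ((n:ℂ) + 1)) * ((c + n) / (e + n)) * x := by
        intro n
        rw [div_mul_div_comm]
        ring
      simp only [key]
      simpa using ((tendsto_ratio_one b).mul (tendsto_ratio_pair c e he)).mul
        (tendsto_const_nhds (x := x))
    exact (continuous_norm.tendsto x).comp this
  apply summable_ratio_aux hx hqlim
  filter_upwards with n
  rw [norm_norm, norm_norm]
  have := hrel n
  simp only [hF] at this ⊢
  rw [this, norm_mul]

lemma one_notNonposInt : notNonposInt 1 := by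
  intro k h
  have := congrArg Complex.re h
  simp at this
  linarith [Nat.cast_nonneg (α := ℝ) k]

lemma one_add_nat_ne_zero (n : ℕ) : (1:ℂ) + n ≠ 0 := by
  have : (1:ℂ) + n = ((n+1 : ℕ) : ℂ) := by push_cast; ring
  rw [this]
  exact_mod_cast Nat.succ_ne_zero n

lemma summable_norm_binom (z : ℂ) (x : ℂ) (hx : ‖x‖ < 1) :
    Summable fun n => ‖poch z n * x ^ n / (n.factorial : ℂ)‖ := by
  have h := summable_norm_hyp z 1 1 one_add_nat_ne_zero
    (fun n => by rw [poch_nat_one]; exact fact_ne n) x hx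
  refine h.congr fun n => ?_
  congr 1
  rw [poch_nat_one]
  have := fact_ne n
  field_simp

lemma tendsto_inv_natCast : Tendsto (fun n : ℕ => ((n : ℂ))⁻¹) atTop (𝓝 0) := by
  have h := tendsto_one_div_atTop_nhds_zero_nat (𝕜 := ℝ)
  have : Tendsto (fun n : ℕ => ((1 / (n : ℝ) : ℝ) : ℂ)) atTop (𝓝 ((0:ℝ):ℂ)) :=
    (Complex.continuous_ofReal.tendsto _).comp h
  simpa [one_div] using this

lemma summable_deriv_bound (z : ℂ) (r : ℝ) (hr0 : 0 < r) (hr1 : r < 1) :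
    Summable fun n => ‖poch z n / (n.factorial : ℂ)‖ * (n * r ^ (n-1)) := by
  set u : ℕ → ℝ := fun n => ‖poch z n / (n.factorial : ℂ)‖ * (n * r ^ (n-1)) with hu
  set q : ℕ → ℝ := fun n => ‖(z + n) * ((n:ℂ))⁻¹‖ * r with hq
  have hqlim : Tendsto q atTop (𝓝 r) := by
    have h1 : Tendsto (fun n : ℕ => (z + n) * ((n:ℂ))⁻¹) atTop (𝓝 1) := by
      have key : ∀ᶠ n : ℕ in atTop, 1 + z * ((n:ℂ))⁻¹ = (z + n) * ((n:ℂ))⁻¹ := by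
        filter_upwards [eventually_ge_atTop 1] with n hn
        have hn0 : ((n:ℂ)) ≠ 0 := Nat.cast_ne_zero.mpr (by omega)
        field_simp
        ring
      have h2 : Tendsto (fun n : ℕ => 1 + z * ((n:ℂ))⁻¹) atTop (𝓝 (1 + z * 0)) :=
        tendsto_const_nhds.add (tendsto_const_nhds.mul tendsto_inv_natCast)
      simp only [mul_zero, add_zero] at h2
      exact h2.congr' key
    have h3 := h1.norm
    rw [norm_one] at h3
    have h4 := h3.mul_const r
    rw [one_mul] at h4
    exact h4
  apply summable_ratio_aux hr1 hqlim
  filter_upwards [eventually_ge_atTop 1] with n hn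
  obtain ⟨k, rfl⟩ : ∃ k, n = k + 1 := ⟨n - 1, by omega⟩
  have hK : ((k+1 : ℕ) : ℂ) ≠ 0 := Nat.cast_ne_zero.mpr (Nat.succ_ne_zero k)
  have hK2 : ((k+2 : ℕ) : ℂ) ≠ 0 := Nat.cast_ne_zero.mpr (Nat.succ_ne_zero (k+1))
  have cid : poch z (k+2) / ((k+2).factorial : ℂ)
      = (poch z (k+1) / ((k+1).factorial : ℂ)) * ((z + ((k+1:ℕ):ℂ)) / ((k+2:ℕ):ℂ)) := by
    rw [poch_succ z (k+1), div_mul_div_comm,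
      div_eq_div_iff (fact_ne ((k+1)+1)) (mul_ne_zero (fact_ne (k+1)) hK2),
      Nat.factorial_succ (k+1)]
    push_cast
    ring
  have nid : ‖poch z (k+2) / ((k+2).factorial : ℂ)‖
      = ‖poch z (k+1) / ((k+1).factorial : ℂ)‖ * (‖z + ((k+1:ℕ):ℂ)‖ / ((k:ℝ)+2)) := by
    rw [cid, norm_mul]
    congr 1
    rw [norm_div, RCLike.norm_natCast]
    norm_num
  have hqn : q (k+1) = ‖z + ((k+1:ℕ):ℂ)‖ * ((k:ℝ)+1)⁻¹ * r := by
    rw [hq]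
    simp only
    rw [norm_mul, norm_inv, RCLike.norm_natCast]
    push_cast
    ring
  have hun : ∀ m : ℕ, u m = ‖poch z m / (m.factorial : ℂ)‖ * (m * r ^ (m-1)) := fun m => rfl
  rw [Real.norm_of_nonneg (by positivity), Real.norm_of_nonneg (by positivity)]
  have e1 : u (k+1+1) = ‖poch z (k+1) / ((k+1).factorial : ℂ)‖
      * (‖z + ((k+1:ℕ):ℂ)‖ / ((k:ℝ)+2)) * (((k:ℝ)+2) * r ^ (k+1)) := by
    rw [hun, nid]
    simp only [Nat.add_sub_cancel]
    push_cast
    ring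
  have e2 : q (k+1) * u (k+1) = ‖z + ((k+1:ℕ):ℂ)‖ * ((k:ℝ)+1)⁻¹ * r
      * (‖poch z (k+1) / ((k+1).factorial : ℂ)‖ * (((k:ℝ)+1) * r ^ k)) := by
    rw [hqn, hun]
    simp only [Nat.add_sub_cancel]
    push_cast
    ring
  rw [e1, e2]
  have hk1 : ((k:ℝ)+1) ≠ 0 := by positivity
  have hk2 : ((k:ℝ)+2) ≠ 0 := by positivity
  apply le_of_eq
  field_simp
  ring

lemma binomial_tsum (z : ℂ) (t : ℝ) (ht0 : 0 ≤ t) (ht1 : t < 1) :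
    ((1:ℂ) - (t:ℝ)) ^ z * (∑' n, poch z n * ((t:ℝ):ℂ) ^ n / (n.factorial : ℂ)) = 1 := by
  set r : ℝ := (1 + t) / 2 with hrdef
  have hr0 : 0 < r := by rw [hrdef]; linarith
  have hr1 : r < 1 := by rw [hrdef]; linarith
  have htr : t < r := by rw [hrdef]; linarith
  set s : Set ℝ := Set.Ioo (-r) r with hs
  set g : ℕ → ℝ → ℂ := fun n y => poch z n / (n.factorial : ℂ) * ((y:ℝ):ℂ) ^ n with hg
  set g' : ℕ → ℝ → ℂ := fun n y => poch z n / (n.factorial : ℂ) * ((n:ℂ) * ((y:ℝ):ℂ) ^ (n-1))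
    with hg'
  set u : ℕ → ℝ := fun n => ‖poch z n / (n.factorial : ℂ)‖ * (n * r ^ (n-1)) with hu
  have hderiv : ∀ n (y : ℝ), HasDerivAt (g n) (g' n y) y := by
    intro n y
    have h1 : HasDerivAt (fun w : ℂ => w ^ n) ((n:ℂ) * ((y:ℝ):ℂ) ^ (n-1)) ((y:ℝ):ℂ) :=
      hasDerivAt_pow n _
    exact (h1.comp_ofReal).const_mul _
  have hbound : ∀ n (y : ℝ), y ∈ s → ‖g' n y‖ ≤ u n := by
    intro n y hy
    rw [hg', hu]
    simp only
    rw [norm_mul, norm_mul, norm_pow, RCLike.norm_natCast, Complex.norm_real]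
    have h1 : ‖y‖ ≤ r := by
      rw [Real.norm_eq_abs, abs_le]
      exact ⟨hy.1.le, hy.2.le⟩
    gcongr
  have husum : Summable u := summable_deriv_bound z r hr0 hr1
  have h0mem : (0:ℝ) ∈ s := ⟨by linarith, hr0⟩
  have hg0 : Summable fun n => g n 0 := by
    apply summable_of_ne_finset_zero (s := {0})
    intro n hn
    simp only [Finset.mem_singleton] at hn
    rw [hg]
    simp [zero_pow hn]
  set f : ℝ → ℂ := fun y => ∑' n, g n y with hf
  have hDeriv : ∀ y ∈ s, HasDerivAt f (∑' n, g' n y) y := fun y hy =>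
    hasDerivAt_tsum_of_isPreconnected husum isOpen_Ioo (convex_Ioo _ _).isPreconnected
      (fun n w _ => hderiv n w) hbound h0mem hg0 hy
  have hSg' : ∀ y ∈ s, Summable fun n => g' n y := fun y hy =>
    Summable.of_norm_bounded husum (fun n => hbound n y hy)
  have hSg : ∀ y ∈ s, Summable fun n => g n y := by
    intro y hy
    have hylt : ‖((y:ℝ):ℂ)‖ < 1 := by
      rw [Complex.norm_real, Real.norm_eq_abs, abs_lt]
      constructor <;> [linarith [hy.1]; linarith [hy.2]]
    refine ((summable_norm_binom z ((y:ℝ):ℂ) hylt).of_norm).congr fun n => ?_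
    rw [hg]
    simp only
    ring
  have ode : ∀ y ∈ s, (1 - ((y:ℝ):ℂ)) * (∑' n, g' n y) = z * f y := by
    intro y hy
    have hA : ∀ n : ℕ, g' (n+1) y = z * g n y + ((y:ℝ):ℂ) * g' n y := by
      intro n
      rw [hg, hg']
      simp only
      match n with
      | 0 => simp [poch_zero, poch_succ]
      | Nat.succ k =>
        rw [poch_succ z (k+1), Nat.factorial_succ (k+1)]
        simp only [Nat.add_sub_cancel]
        have h1 := fact_ne (k+1)
        have h2 : ((k:ℂ) + 1 + 1) ≠ 0 := by
          have : ((k:ℂ) + 1 + 1) = (((k+2 : ℕ)):ℂ) := by push_cast; ring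
          rw [this]
          exact Nat.cast_ne_zero.mpr (Nat.succ_ne_zero (k+1))
        push_cast
        field_simp
        simp only [Nat.succ_eq_add_one, pow_succ]
        ring
    have hzero : g' 0 y = 0 := by rw [hg']; simp
    have S1 := hSg' y hy
    have S2 := hSg y hy
    have step : ∑' n, g' (n+1) y = ∑' n, (z * g n y + ((y:ℝ):ℂ) * g' n y) :=
      tsum_congr hA
    have hkey : (∑' n, g' n y) = z * f y + ((y:ℝ):ℂ) * (∑' n, g' n y) := by
      conv_lhs => rw [Summable.tsum_eq_zero_add S1]
      rw [hzero, zero_add, step, Summable.tsum_add (S2.mul_left z) (S1.mul_left _),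
        tsum_mul_left, tsum_mul_left]
    linear_combination hkey
  set h : ℝ → ℂ := fun y => ((1:ℂ) - ((y:ℝ):ℂ)) ^ z * f y with hh
  have hsub : Set.Icc (0:ℝ) t ⊆ s := fun y hy => ⟨by linarith [hy.1], by linarith [hy.2]⟩
  have hhd : ∀ y ∈ Set.Icc (0:ℝ) t, HasDerivAt h 0 y := by
    intro y hy
    have hys : y ∈ s := hsub hy
    have hylt : y < 1 := lt_of_le_of_lt hy.2 ht1
    have hbne : ((1:ℂ) - ((y:ℝ):ℂ)) ≠ 0 := by
      rw [show ((1:ℂ) - ((y:ℝ):ℂ)) = (((1 - y : ℝ)):ℂ) by push_cast; ring]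
      exact Complex.ofReal_ne_zero.mpr (by linarith)
    have hslit : ((1:ℂ) - ((y:ℝ):ℂ)) ∈ Complex.slitPlane := by
      rw [Complex.mem_slitPlane_iff]
      left
      simp only [Complex.sub_re, Complex.one_re, Complex.ofReal_re]
      linarith
    have hinnerC : HasDerivAt (fun w : ℂ => (1:ℂ) - w) (-1) ((y:ℝ):ℂ) := by
      simpa using (hasDerivAt_id ((y:ℝ):ℂ)).const_sub 1
    have hcpowC : HasDerivAt (fun w : ℂ => ((1:ℂ) - w) ^ z)
        (z * ((1:ℂ) - ((y:ℝ):ℂ)) ^ (z-1) * (-1)) ((y:ℝ):ℂ) :=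
      hinnerC.cpow_const hslit
    have hcpow : HasDerivAt (fun w : ℝ => ((1:ℂ) - ((w:ℝ):ℂ)) ^ z)
        (z * ((1:ℂ) - ((y:ℝ):ℂ)) ^ (z-1) * (-1)) y := hcpowC.comp_ofReal
    have total := hcpow.mul (hDeriv y hys)
    have hval : z * ((1:ℂ) - ((y:ℝ):ℂ)) ^ (z-1) * (-1) * f y
        + ((1:ℂ) - ((y:ℝ):ℂ)) ^ z * (∑' n, g' n y) = 0 := by
      have key : ((1:ℂ) - ((y:ℝ):ℂ)) ^ z
          = ((1:ℂ) - ((y:ℝ):ℂ)) ^ (z-1) * ((1:ℂ) - ((y:ℝ):ℂ)) := by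
        conv_lhs => rw [show z = (z-1) + 1 by ring]
        rw [Complex.cpow_add _ _ hbne, Complex.cpow_one]
      rw [key]
      linear_combination ((1:ℂ) - ((y:ℝ):ℂ)) ^ (z-1) * (ode y hys)
    exact hval ▸ total
  have hcont : ContinuousOn h (Set.Icc 0 t) := fun y hy =>
    ((hhd y hy).continuousAt).continuousWithinAt
  have hconst := constant_of_has_deriv_right_zero hcont
    (fun y hy => ((hhd y (Set.Ico_subset_Icc_self hy)).hasDerivWithinAt))
  have hend : h t = h 0 := hconst t (Set.right_mem_Icc.mpr ht0)
  have hone : h 0 = 1 := by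
    rw [hh]
    simp only
    have hf0 : f 0 = 1 := by
      rw [hf]
      simp only
      rw [tsum_eq_single 0 ?_]
      · rw [hg]; simp [poch_zero]
      · intro n hn
        rw [hg]
        simp [zero_pow hn]
    rw [hf0]
    norm_num
  have hft : f t = ∑' n, poch z n * ((t:ℝ):ℂ) ^ n / (n.factorial : ℂ) :=
    tsum_congr fun n => by rw [hg]; simp only; ring
  rw [← hft]
  exact hend.trans hone


theorem euler_transformation (b c e : ℂ) (he : notNonposInt e)
    (t : ℝ) (ht0 : 0 ≤ t) (ht1 : t < 1) :
    (∑' (m : ℕ), poch b m * poch c m * (t : ℂ) ^ m /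
        (poch e m * (Nat.factorial m : ℂ))) =
      ((1 : ℂ) - t) ^ (e - b - c) *
        ∑' (m : ℕ), poch (e - b) m * poch (e - c) m * (t : ℂ) ^ m /
          (poch e m * (Nat.factorial m : ℂ)) := by
  have hene : ∀ n : ℕ, e + (n:ℂ) ≠ 0 := he.add_nat_ne_zero
  have hpe : ∀ n, poch e n ≠ 0 := poch_ne_zero he
  have hxt : ‖((t:ℝ):ℂ)‖ < 1 := by
    rw [Complex.norm_real, Real.norm_eq_abs, _root_.abs_of_nonneg ht0]
    exact ht1
  set F : ℕ → ℂ := fun n => poch b n * poch c n * ((t:ℝ):ℂ) ^ n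
    / (poch e n * (n.factorial : ℂ)) with hF
  set G : ℕ → ℂ := fun n => poch (e-b-c) n * ((t:ℝ):ℂ) ^ n / (n.factorial : ℂ) with hG
  have hFnorm : Summable fun n => ‖F n‖ := summable_norm_hyp b c e hene hpe _ hxt
  have hGnorm : Summable fun n => ‖G n‖ := summable_norm_binom (e-b-c) _ hxt
  have cauchy := tsum_mul_tsum_eq_tsum_sum_range_of_summable_norm hFnorm hGnorm
  have coeff : ∀ n : ℕ, ∑ k ∈ range (n+1), F k * G (n-k)
      = poch (e-b) n * poch (e-c) n * ((t:ℝ):ℂ) ^ n / (poch e n * (n.factorial : ℂ)) := by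
    intro n
    have key : ∀ k ∈ range (n+1), F k * G (n-k)
        = ((t:ℝ):ℂ) ^ n * (poch b k * poch c k * poch (e-b-c) (n-k)
            / (poch e k * (k.factorial : ℂ) * ((n-k).factorial : ℂ))) := by
      intro k hk
      have hkn : k ≤ n := by simpa [Nat.lt_succ_iff] using hk
      have hpow : ((t:ℝ):ℂ) ^ k * ((t:ℝ):ℂ) ^ (n-k) = ((t:ℝ):ℂ) ^ n := by
        rw [← pow_add]
        congr 1
        omega
      rw [hF, hG]
      simp only
      rw [div_mul_div_comm]
      rw [show poch b k * poch c k * ((t:ℝ):ℂ) ^ k * (poch (e-b-c) (n-k) * ((t:ℝ):ℂ) ^ (n-k))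
          = ((t:ℝ):ℂ) ^ n * (poch b k * poch c k * poch (e-b-c) (n-k)) by
        rw [← hpow]; ring]
      rw [mul_div_assoc]
    rw [Finset.sum_congr rfl key, ← Finset.mul_sum, saalschutz b c e he n]
    ring
  have main : (∑' n, F n) * (∑' n, G n)
      = ∑' n, poch (e-b) n * poch (e-c) n * ((t:ℝ):ℂ) ^ n
          / (poch e n * (n.factorial : ℂ)) := by
    rw [cauchy]
    exact tsum_congr coeff
  have binom := binomial_tsum (e-b-c) t ht0 ht1
  rw [← main, show ((1:ℂ) - ((t:ℝ):ℂ)) ^ (e-b-c) * ((∑' n, F n) * (∑' n, G n))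
      = (∑' n, F n) * (((1:ℂ) - ((t:ℝ):ℂ)) ^ (e-b-c)
        * ∑' n, poch (e-b-c) n * ((t:ℝ):ℂ) ^ n / (n.factorial : ℂ)) by rw [hG]; ring,
    binom, mul_one]
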